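/- Unrestricted floating-point GNNs are strictly more expressive than bounded floating-point GNNs: the property 'the distinguished node has an even number of out-neighbours' is expressible by an unrestricted GNN[F], but for every k, no GNN with aggregation function invariant under capping multiplicities at k can express it, since such a GNN cannot distinguish the centers of two star graphs with k and k+1 out-neighbours respectively. -/

import Mathlib

/-- A finite directed node-labeled graph: finite node set `V`, out-neighbour
finsets `adj v`, and a labeling of nodes by sets of node label symbols from `α`. -/
structure LGraph (α : Type) : Type 1 where
  V : Type
  fintypeV : Fintype V
  adj : V → Finset V
  label : V → Set α

attribute [instance] LGraph.fintypeV

/-- A (recurrent) graph neural network over feature values `S` with dimension `d`: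
an initialization function from label sets to feature vectors, an aggregation function on
multisets of feature vectors, a combination function, and a set of accepting vectors. -/
structure FGNN (α S : Type) (d : ℕ) where
  init : Set α → (Fin d → S)
  agg : Multiset (Fin d → S) → (Fin d → S)
  comb : (Fin d → S) → (Fin d → S) → (Fin d → S)
  acc : Set (Fin d → S)

/-- The feature vector of a node at each round:
`x_v⁰ = init (label v)` and `x_v^{t+1} = comb (x_v^t) (agg {{ x_u^t : (v,u) ∈ E }})`. -/
def FGNN.state {α S : Type} {d : ℕ} (N : FGNN α S d) (G : LGraph α) : ℕ → G.V → (Fin d → S)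
  | 0, v => N.init (G.label v)
  | n + 1, v => N.comb (N.state G n v) (N.agg ((G.adj v).val.map (N.state G n)))

/-- The GNN accepts `(G, w)` iff `w` visits an accepting feature vector at some round. -/
def FGNN.accepts {α S : Type} {d : ℕ} (N : FGNN α S d) (G : LGraph α) (w : G.V) : Prop :=
  ∃ n : ℕ, N.state G n w ∈ N.acc

/-- The `k`-projection of a multiset: every multiplicity is capped at `k`. -/
noncomputable def capProj {β : Type*} (k : ℕ) (M : Multiset β) : Multiset β :=
  letI := Classical.decEq β
  M.toFinset.val.bind fun a => Multiset.replicate (min k (M.count a)) a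

/-!
A bounded aggregation cannot tell `k` copies of a feature from `k + 1` copies. In the star
graph with `m` leaves, every leaf is a dead end whose feature sequence does not depend on `m`,
so the center aggregates `m` copies of one feature in every round; for a `k`-bounded GNN the
centers of the stars with `k` and `k + 1` leaves therefore have the same feature sequence,
although exactly one of `k`, `k + 1` is even. An unrestricted GNN reads the parity off the
cardinality of the aggregated multiset directly.
-/

theorem capProj_replicate {β : Type*} (k m : ℕ) (a : β) :
    capProj k (Multiset.replicate m a) = Multiset.replicate (min k m) a := by
  classical
  rcases Nat.eq_zero_or_pos m with rfl | hm
  · simp [capProj]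
  · simp [capProj, Multiset.toFinset_replicate, hm.ne']

def starGraph (α : Type) (m : ℕ) : LGraph α where
  V := Option (Fin m)
  fintypeV := inferInstance
  adj := fun
    | none => Finset.univ.map Function.Embedding.some
    | some _ => ∅
  label := fun _ => ∅

theorem starGraph_adj_center_card (α : Type) (m : ℕ) :
    ((starGraph α m).adj none).card = m := by
  simp [starGraph]

namespace FGNN

variable {α S : Type} {d : ℕ}

def IsBounded (N : FGNN α S d) (k : ℕ) : Prop :=
  ∀ M : Multiset (Fin d → S), N.agg M = N.agg (capProj k M)

theorem IsBounded.agg_replicate_succ {N : FGNN α S d} {k : ℕ} (hN : N.IsBounded k)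
    (s : Fin d → S) :
    N.agg (Multiset.replicate (k + 1) s) = N.agg (Multiset.replicate k s) := by
  rw [hN, hN (Multiset.replicate k s), capProj_replicate, capProj_replicate,
    min_eq_left k.le_succ, min_self]

theorem state_of_adj_eq_empty (N : FGNN α S d) {G : LGraph α} {v : G.V} (hv : G.adj v = ∅)
    (n : ℕ) : N.state G n v = (fun x => N.comb x (N.agg 0))^[n] (N.init (G.label v)) := by
  induction n with
  | zero => rfl
  | succ n ih => rw [Function.iterate_succ_apply', ← ih, state, hv]; rfl

theorem state_starGraph_center_succ (N : FGNN α S d) (m n : ℕ) :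
    N.state (starGraph α m) (n + 1) none =
      N.comb (N.state (starGraph α m) n none)
        (N.agg (Multiset.replicate m ((fun x => N.comb x (N.agg 0))^[n] (N.init ∅)))) := by
  have hleaves : ((starGraph α m).adj none).val.map (N.state (starGraph α m) n) =
      Multiset.replicate m ((fun x => N.comb x (N.agg 0))^[n] (N.init ∅)) := by
    refine Multiset.eq_replicate.mpr
      ⟨(Multiset.card_map _ _).trans (starGraph_adj_center_card α m), ?_⟩
    simp only [starGraph, Finset.map_val, Multiset.map_map, Multiset.mem_map]
    rintro _ ⟨i, -, rfl⟩
    exact N.state_of_adj_eq_empty (G := starGraph α m) (v := some i) rfl n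
  rw [← hleaves]
  rfl

theorem IsBounded.state_starGraph_center {N : FGNN α S d} {k : ℕ}
    (hN : N.IsBounded k) (n : ℕ) :
    N.state (starGraph α (k + 1)) n none = N.state (starGraph α k) n none := by
  induction n with
  | zero => rfl
  | succ n ih =>
    rw [N.state_starGraph_center_succ, N.state_starGraph_center_succ, ih,
      hN.agg_replicate_succ]

theorem IsBounded.accepts_starGraph_center_iff {N : FGNN α S d} {k : ℕ}
    (hN : N.IsBounded k) :
    N.accepts (starGraph α (k + 1)) none ↔ N.accepts (starGraph α k) none := by
  simp only [accepts, hN.state_starGraph_center]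

end FGNN

def parityGNN (α : Type) : FGNN α Bool 1 where
  init := fun _ _ => false
  agg := fun M _ => decide (Even (Multiset.card M))
  comb := fun _ y => y
  acc := {f | f 0 = true}

theorem parityGNN_state_succ (α : Type) (G : LGraph α) (w : G.V) (n : ℕ) :
    (parityGNN α).state G (n + 1) w = fun _ => decide (Even (G.adj w).card) := by
  simp [FGNN.state, parityGNN]

theorem parityGNN_accepts_iff (α : Type) (G : LGraph α) (w : G.V) :
    (parityGNN α).accepts G w ↔ Even (G.adj w).card := by
  constructor
  · rintro ⟨_ | n, hn⟩
    · simp [FGNN.state, parityGNN] at hn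
    · rw [parityGNN_state_succ] at hn
      simpa [parityGNN] using hn
  · intro h
    exact ⟨1, by rw [parityGNN_state_succ]; simpa [parityGNN]⟩

/-- Unrestricted floating-point GNNs are strictly more expressive than
bounded ones: the property "the distinguished node has an even number of out-neighbours"
is expressible by a GNN over some finite feature value type, but for every `k`, no GNN whose
aggregation function is invariant under capping multiplicities at `k` expresses it. -/
theorem unrestricted_gnnf_strictly_more_expressive_than_bounded (α : Type) :
    (∃ (S : Type) (_ : Fintype S) (d : ℕ) (N : FGNN α S d),
      ∀ (G : LGraph α) (w : G.V), N.accepts G w ↔ Even (G.adj w).card) ∧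
    (∀ (S : Type) (d k : ℕ) (N : FGNN α S d),
      (∀ M : Multiset (Fin d → S), N.agg M = N.agg (capProj k M)) →
      ¬ ∀ (G : LGraph α) (w : G.V), N.accepts G w ↔ Even (G.adj w).card) := by
  refine ⟨⟨Bool, inferInstance, 1, parityGNN α, parityGNN_accepts_iff α⟩, ?_⟩
  intro S d k N hN hexpr
  have hk := hexpr (starGraph α k) none
  have hk1 := hexpr (starGraph α (k + 1)) none
  rw [starGraph_adj_center_card, FGNN.IsBounded.accepts_starGraph_center_iff hN] at hk1
  rw [starGraph_adj_center_card] at hk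
  exact not_iff_self (Nat.even_add_one.symm.trans (hk1.symm.trans hk))
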